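/- Let G be a strongly connected digraph with n vertices and m edges, and let L(G) be its line digraph. The Kemeny constant of the simple random walk on L(G) equals the Kemeny constant of the simple random walk on G plus m - n: K(L(G)) = K(G) + m - n. -/

import Mathlib

/-! A digraph on a finite vertex type `V` is given by its edge set `E : Finset (V × V)`. -/

variable {V : Type*} [Fintype V] [DecidableEq V]

/-- The outdegree of a vertex `v`: the number of edges with tail `v`. -/
def outdeg (E : Finset (V × V)) (v : V) : ℕ := (E.filter fun e => e.1 = v).card

/-- The indegree of a vertex `v`: the number of edges with head `v`. -/
def indeg (E : Finset (V × V)) (v : V) : ℕ := (E.filter fun e => e.2 = v).card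

/-- The edge set of the line digraph: its vertices are the edges of `G`, with an edge
`e → f` exactly when the head of `e` is the tail of `f`. -/
def lineE (E : Finset (V × V)) : Finset ({e // e ∈ E} × {e // e ∈ E}) :=
  Finset.univ.filter fun p => (p.1 : V × V).2 = (p.2 : V × V).1

/-- Strong connectivity: every vertex can reach every other vertex along directed edges. -/
def StronglyConnected (E : Finset (V × V)) : Prop :=
  ∀ u v : V, Relation.ReflTransGen (fun a b => (a, b) ∈ E) u v

/-- The transition matrix of the simple random walk on the digraph `E`: from `i`, move to
each out-neighbour with probability `1 / d⁺(i)`. -/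
noncomputable def transMat (E : Finset (V × V)) : Matrix V V ℝ :=
  fun i j => if (i, j) ∈ E then (outdeg E i : ℝ)⁻¹ else 0

/-- The Kemeny constant of `P`, defined spectrally as `∑_{λ ≠ 1} 1/(1-λ)`, the sum running
over the roots (with multiplicity) of the characteristic polynomial of `P` over `ℂ`,
with one copy of the eigenvalue `1` removed. -/
noncomputable def kemeny {n : Type*} [Fintype n] [DecidableEq n] (P : Matrix n n ℝ) : ℂ :=
  (((P.map (Complex.ofReal)).charpoly.roots.erase 1).map fun z => (1 - z)⁻¹).sum

/-- `π` is a stationary distribution of `P`: positive, summing to `1`, with `πᵀ P = πᵀ`. -/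
def IsStationaryDist {n : Type*} [Fintype n] (P : Matrix n n ℝ) (π : n → ℝ) : Prop :=
  (∀ i, 0 < π i) ∧ (∑ i, π i = 1) ∧ ∀ j, ∑ i, π i * P i j = π j

/-- `f` is (the parent map of) an oriented spanning tree of `E` rooted at `u`: the root is
a fixed point, every other vertex `v` has its unique out-edge `(v, f v) ∈ E`, and iterating
`f` from any vertex reaches the root. -/
def IsSpanTree (E : Finset (V × V)) (u : V) (f : V → V) : Prop :=
  f u = u ∧ (∀ v, v ≠ u → (v, f v) ∈ E) ∧ ∀ v, ∃ k : ℕ, f^[k] v = u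

/-- The number of oriented spanning trees of `E` rooted at `u`. -/
noncomputable def kappa (E : Finset (V × V)) (u : V) : ℕ :=
  Nat.card {f : V → V // IsSpanTree E u f}

/-- `σ` is (the successor map of) an Eulerian circuit of `E`: a permutation of the edges
such that each edge is followed by an edge starting at its head, acting transitively on
the edges (a single closed walk through all edges). Eulerian circuits, counted up to
cyclic rotation, correspond bijectively to such permutations. -/
def IsEulerSucc (E : Finset (V × V)) (σ : Equiv.Perm {e // e ∈ E}) : Prop :=
  (∀ e : {e // e ∈ E}, (e : V × V).2 = ((σ e : {e // e ∈ E}) : V × V).1) ∧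
    ∀ e f : {e // e ∈ E}, ∃ k : ℕ, (σ ^ k) e = f

/-- The number of Eulerian circuits of `E`. -/
noncomputable def eulerCount (E : Finset (V × V)) : ℕ :=
  Nat.card {σ : Equiv.Perm {e // e ∈ E} // IsEulerSucc E σ}

/-- The `k`-blow-up of `E`: each vertex `i` becomes the class `{i} × Fin k`, with all edges
from the class of `i` to the class of `j` whenever `(i, j)` is an edge. -/
def blowup (E : Finset (V × V)) (k : ℕ) : Finset ((V × Fin k) × (V × Fin k)) :=
  Finset.univ.filter fun p => (p.1.1, p.2.1) ∈ E

/-- The spanning tree enumerator of `E` rooted at `u`, with edge weights induced by vertex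
indeterminates `w` (the edge `(v, z)` has weight `w z`): the sum over all oriented spanning
trees rooted at `u` of the product of the weights of their edges. -/
noncomputable def treeEnum {R : Type*} [CommRing R] (E : Finset (V × V)) (w : V → R)
    (u : V) : R :=
  ∑ᶠ (f : V → V) (_ : IsSpanTree E u f), ∏ v ∈ Finset.univ.erase u, w (f v)


/-!
Let `H : E → V` send an edge to its head and `T : V → E` send a vertex to each of its out-edges
with probability `1 / d⁺`. Then the walk on `G` is `T * H` and the walk on `L(G)` is `H * T`.
The characteristic polynomials of `H * T` and `T * H` agree up to a power of `X`, so the two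
spectra agree except for `m - n` extra zero eigenvalues, each contributing `1 / (1 - 0) = 1` to
the Kemeny constant.
-/

open Matrix Polynomial

lemma Polynomial.roots_erase_add_eq_of_X_pow_mul_eq {R : Type*} [CommRing R] [IsDomain R]
    [DecidableEq R] {p q : R[X]} {a b : ℕ} (hp : p ≠ 0) (hq : q ≠ 0)
    (h : X ^ a * p = X ^ b * q) {r : R} (hr : r ≠ 0) :
    a • {0} + p.roots.erase r = b • {0} + q.roots.erase r := by
  have hroots := congrArg roots h
  rw [roots_mul (mul_ne_zero (pow_ne_zero _ X_ne_zero) hp),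
    roots_mul (mul_ne_zero (pow_ne_zero _ X_ne_zero) hq), roots_X_pow, roots_X_pow] at hroots
  have hr' : ∀ k : ℕ, r ∉ k • ({0} : Multiset R) := fun k hk => by
    rw [Multiset.nsmul_singleton] at hk
    exact hr (Multiset.eq_of_mem_replicate hk)
  rw [← Multiset.erase_add_right_neg _ (hr' a), ← Multiset.erase_add_right_neg _ (hr' b), hroots]

lemma kemeny_mul_comm_add_card {m n : Type*} [Fintype m] [DecidableEq m] [Fintype n]
    [DecidableEq n] (A : Matrix m n ℝ) (B : Matrix n m ℝ) :
    kemeny (A * B) + Fintype.card n = kemeny (B * A) + Fintype.card m := by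
  have hroots := roots_erase_add_eq_of_X_pow_mul_eq (charpoly_monic _).ne_zero
    (charpoly_monic _).ne_zero (charpoly_mul_comm' (A.map Complex.ofReal) (B.map Complex.ofReal))
    one_ne_zero
  have hsum := congrArg (fun s : Multiset ℂ => (s.map fun z => (1 - z)⁻¹).sum) hroots
  simp only [Multiset.map_add, Multiset.sum_add, Multiset.map_nsmul, Multiset.sum_nsmul,
    Multiset.map_singleton, Multiset.sum_singleton, sub_zero, inv_one, nsmul_eq_mul,
    mul_one] at hsum
  have hAB : (A * B).map Complex.ofReal = A.map Complex.ofReal * B.map Complex.ofReal :=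
    Matrix.map_mul (f := Complex.ofRealHom)
  have hBA : (B * A).map Complex.ofReal = B.map Complex.ofReal * A.map Complex.ofReal :=
    Matrix.map_mul (f := Complex.ofRealHom)
  rw [kemeny, kemeny, hAB, hBA]
  linear_combination hsum

def headIncidence (E : Finset (V × V)) : Matrix {e // e ∈ E} V ℝ :=
  fun e v => if (e : V × V).2 = v then 1 else 0

noncomputable def tailTransition (E : Finset (V × V)) : Matrix V {e // e ∈ E} ℝ :=
  fun v f => if (f : V × V).1 = v then (outdeg E v : ℝ)⁻¹ else 0

omit [Fintype V] in
lemma outdeg_lineE (E : Finset (V × V)) (e : {e // e ∈ E}) :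
    outdeg (lineE E) e = outdeg E (e : V × V).2 := by
  unfold outdeg lineE
  rw [Finset.filter_filter]
  refine Finset.card_bij' (fun p _ => (p.2 : V × V))
    (fun f hf => (e, ⟨f, (Finset.mem_filter.mp hf).1⟩)) ?_ ?_ ?_ ?_
  · intro p hp
    simp only [Finset.mem_filter, Finset.mem_univ, true_and] at hp
    exact Finset.mem_filter.mpr ⟨p.2.2, hp.2 ▸ hp.1.symm⟩
  · intro f hf
    simp only [Finset.mem_filter] at hf
    simp [hf.2]
  · intro p hp
    simp only [Finset.mem_filter, Finset.mem_univ, true_and] at hp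
    exact Prod.ext hp.2.symm rfl
  · intro f _
    rfl

lemma transMat_lineE_eq_mul (E : Finset (V × V)) :
    transMat (lineE E) = headIncidence E * tailTransition E := by
  ext e f
  rw [transMat, outdeg_lineE]
  simp only [lineE, headIncidence, tailTransition, mul_apply, ite_mul, one_mul, zero_mul,
    Finset.sum_ite_eq, Finset.mem_filter, Finset.mem_univ, true_and, if_true]
  simp only [eq_comm]

omit [Fintype V] in
lemma transMat_eq_mul (E : Finset (V × V)) :
    transMat E = tailTransition E * headIncidence E := by
  ext v w
  simp only [transMat, headIncidence, tailTransition, mul_apply, mul_ite, mul_zero, mul_one]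
  have hpair : ∀ e : V × V, (e.2 = w ∧ e.1 = v) ↔ e = (v, w) := fun e => by
    rw [Prod.ext_iff, and_comm]
  simp only [← ite_and, hpair]
  rw [Finset.sum_coe_sort E (fun e => if e = (v, w) then (outdeg E v : ℝ)⁻¹ else 0),
    Finset.sum_ite_eq']

theorem stmt8_general (E : Finset (V × V)) :
    kemeny (transMat (lineE E)) =
      kemeny (transMat E) + (E.card : ℂ) - (Fintype.card V : ℂ) := by
  have h := kemeny_mul_comm_add_card (headIncidence E) (tailTransition E)
  rw [← transMat_lineE_eq_mul, ← transMat_eq_mul, Fintype.card_coe] at h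
  linear_combination h

/-- For a strongly connected digraph `G` with `n` vertices and `m` edges, the Kemeny
constant of the simple random walk on the line digraph satisfies
`K(L(G)) = K(G) + m - n`. -/
theorem stmt8 (E : Finset (V × V)) (hconn : StronglyConnected E) :
    kemeny (transMat (lineE E)) =
      kemeny (transMat E) + (E.card : ℂ) - (Fintype.card V : ℂ) :=
  stmt8_general E
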